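/- arXiv:1302.2713 — 2 statements merged into one kernel-verified Lean document; each statement's English description precedes it below -/
import Mathlib

section
/- Let f̃ ∈ ℝ^d and A = [ĩ¹ ⋯ ĩ^M], B = [ī¹ ⋯ ī^M] ∈ ℝ^{d×M} with BᵀA invertible. Define the antisymmetric (M+1)-tensor S̃ = (1/det(BᵀA)) f̃ ∧ ĩ¹ ∧ ⋯ ∧ ĩ^M. Then for every j, S̃_{j j₁ … j_M} ī¹_{j₁} ⋯ ī^M_{j_M} = (P f̃)_j where P = I - A(BᵀA)^{-1}Bᵀ. -/
/-!
Expanding the determinant multilinearly in its last `M` columns, the contraction of the wedge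
product with `ī¹, …, ī^M` is the determinant of the `(M+1) × (M+1)` matrix with rows
`(x_{j₀}, xᵀB)` for `x = f̃, ĩ¹, …, ĩ^M`. Write `f̃ = P f̃ + A c` with `c = (BᵀA)⁻¹Bᵀf̃`: the part
`A c` of the first row is a combination of the other rows and drops out, and since `Bᵀ P f̃ = 0`
the first row becomes `((P f̃)_{j₀}, 0, …, 0)`, whose cofactor is `det (AᵀB) = det (BᵀA)`.
-/

open Matrix

variable {R : Type*} [CommRing R]

theorem sum_sign_mul_prod_eq_det {n ι : Type*} [Fintype n] [DecidableEq n]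
    (w : n → ι → R) (p : n → ι) :
    ∑ σ : Equiv.Perm n, ((Equiv.Perm.sign σ : ℤ) : R) * ∏ k, w k (p (σ k)) =
      det (of fun k l => w k (p l)) := by
  rw [← det_transpose, det_apply']
  rfl

@[simps]
def consEvalVecMul {n : ℕ} {ι : Type*} [Fintype ι] (i₀ : ι) (B : Matrix ι (Fin n) R) :
    (ι → R) →ₗ[R] Fin (n + 1) → R where
  toFun x := Fin.cons (x i₀) (x ᵥ* B)
  map_add' x y := by
    ext l
    cases l using Fin.cases <;> simp [add_vecMul]
  map_smul' r x := by
    ext l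
    cases l using Fin.cases <;> simp [smul_vecMul]

theorem sum_det_cons_mul_prod {n : ℕ} {ι : Type*} [Fintype ι] [DecidableEq ι]
    (w : Fin (n + 1) → ι → R) (i₀ : ι) (B : Matrix ι (Fin n) R) :
    ∑ j : Fin n → ι, det (of fun k l => w k ((Fin.cons i₀ j : Fin (n + 1) → ι) l)) *
        ∏ m, B (j m) m =
      det (of fun k => consEvalVecMul i₀ B (w k)) := by
  simp only [det_apply', Finset.sum_mul]
  rw [Finset.sum_comm]
  refine Finset.sum_congr rfl fun σ _ => ?_
  have expand : ∏ m, (w (σ m.succ) ᵥ* B) m =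
      ∑ j : Fin n → ι, ∏ m, w (σ m.succ) (j m) * B (j m) m := by
    simp only [vecMul, dotProduct, Finset.prod_univ_sum, Fintype.piFinset_univ]
  simp only [Fin.prod_univ_succ, of_apply, consEvalVecMul_apply, Fin.cons_zero, Fin.cons_succ,
    expand, Finset.mul_sum, Finset.prod_mul_distrib, mul_assoc]

theorem AlternatingMap.map_cons_add_sum_smul {M N : Type*} [AddCommGroup M] [Module R M]
    [AddCommGroup N] [Module R N] {n : ℕ} (f : M [⋀^Fin (n + 1)]→ₗ[R] N) (x : M)
    (v : Fin n → M) (c : Fin n → R) :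
    f (Fin.cons (x + ∑ m, c m • v m) v) = f (Fin.cons x v) := by
  have repeated (m : Fin n) : f (Fin.cons (v m) v) = 0 :=
    f.map_eq_zero_of_eq (i := 0) (j := m.succ) _ (by simp) (Fin.succ_ne_zero m).symm
  rw [← Fin.update_cons_zero (α := fun _ => M) x v, f.map_update_add, f.map_update_sum]
  simp_rw [f.map_update_smul, Fin.update_cons_zero, repeated, smul_zero, Finset.sum_const_zero,
    add_zero]

theorem det_eq_mul_det_submatrix_succ_of_row_zero {n : ℕ}
    (N : Matrix (Fin (n + 1)) (Fin (n + 1)) R) (h : ∀ m : Fin n, N 0 m.succ = 0) :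
    det N = N 0 0 * det (N.submatrix Fin.succ Fin.succ) := by
  simp [det_succ_row_zero N, Fin.sum_univ_succ, h]

theorem det_consEvalVecMul_cons_add_mulVec {n : ℕ} {ι : Type*} [Fintype ι] (i₀ : ι)
    (A B : Matrix ι (Fin n) R) (g : ι → R) (c : Fin n → R) (hg : g ᵥ* B = 0) :
    det (of fun k => consEvalVecMul i₀ B
        ((Fin.cons (g + A *ᵥ c) (fun m => Aᵀ m) : Fin (n + 1) → ι → R) k)) =
      g i₀ * det (Aᵀ * B) := by
  have hAc : A *ᵥ c = ∑ m, c m • Aᵀ m := by simp [mulVec_eq_sum]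
  calc _ = det (of fun k => consEvalVecMul i₀ B
          ((Fin.cons g (fun m => Aᵀ m) : Fin (n + 1) → ι → R) k)) := by
        rw [hAc]
        exact (detRowAlternating.compLinearMap (consEvalVecMul i₀ B)).map_cons_add_sum_smul g _ c
    _ = g i₀ * det (Aᵀ * B) := by
        rw [det_eq_mul_det_submatrix_succ_of_row_zero _ fun m => by simp [hg]]
        -- the corner entry is `g i₀` and the minor is `Aᵀ * B`, both by unfolding `vecMul`
        rfl

theorem wedge_discrete_gradient_eq_projection_general {d M : ℕ}
    (ftilde : Fin d → ℝ) (A B : Matrix (Fin d) (Fin M) ℝ)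
    (hdet : (Bᵀ * A).det ≠ 0) (j₀ : Fin d) :
    ((Bᵀ * A).det)⁻¹ *
        ∑ j : Fin M → Fin d,
          (∑ σ : Equiv.Perm (Fin (M + 1)),
            ((Equiv.Perm.sign σ : ℤ) : ℝ) *
              ∏ k : Fin (M + 1),
                (Fin.cons ftilde (fun m : Fin M => Aᵀ m) : Fin (M + 1) → Fin d → ℝ) k
                  ((Fin.cons j₀ j : Fin (M + 1) → Fin d) (σ k))) *
          ∏ m : Fin M, B (j m) m
      = ((((1 : Matrix (Fin d) (Fin d) ℝ) - A * (Bᵀ * A)⁻¹ * Bᵀ)) *ᵥ ftilde) j₀ := by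
  set c := (Bᵀ * A)⁻¹ *ᵥ (Bᵀ *ᵥ ftilde)
  set g := ftilde - A *ᵥ c
  have hPf : ((1 - A * (Bᵀ * A)⁻¹ * Bᵀ) *ᵥ ftilde) j₀ = g j₀ := by
    simp [g, c, sub_mulVec, mulVec_mulVec, Matrix.mul_assoc]
  have hgB : g ᵥ* B = 0 := by
    rw [← mulVec_transpose, mulVec_sub, mulVec_mulVec, mulVec_mulVec,
      mul_nonsing_inv _ (isUnit_iff_ne_zero.mpr hdet), one_mulVec, sub_self]
  have hf : ftilde = g + A *ᵥ c := (sub_add_cancel _ _).symm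
  have hdetT : det (Aᵀ * B) = det (Bᵀ * A) := by
    rw [← det_transpose, transpose_mul, transpose_transpose]
  simp only [sum_sign_mul_prod_eq_det, sum_det_cons_mul_prod]
  rw [hPf, hf, det_consEvalVecMul_cons_add_mulVec _ _ _ _ _ hgB, hdetT]
  field_simp

/-- The contraction of S̃ = (1/det(BᵀA)) f̃ ∧ ĩ¹ ∧ ⋯ ∧ ĩ^M with the discrete gradients
ī¹,…,ī^M gives the oblique projection P f̃, where P = I - A(BᵀA)⁻¹Bᵀ. -/
theorem wedge_discrete_gradient_eq_projection {d M : ℕ} (hM : M < d)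
    (ftilde : Fin d → ℝ) (A B : Matrix (Fin d) (Fin M) ℝ)
    (hdet : (Bᵀ * A).det ≠ 0) (j₀ : Fin d) :
    ((Bᵀ * A).det)⁻¹ *
        ∑ j : Fin M → Fin d,
          (∑ σ : Equiv.Perm (Fin (M + 1)),
            ((Equiv.Perm.sign σ : ℤ) : ℝ) *
              ∏ k : Fin (M + 1),
                (Fin.cons ftilde (fun m : Fin M => Aᵀ m) : Fin (M + 1) → Fin d → ℝ) k
                  ((Fin.cons j₀ j : Fin (M + 1) → Fin d) (σ k))) *
          ∏ m : Fin M, B (j m) m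
      = ((((1 : Matrix (Fin d) (Fin d) ℝ) - A * (Bᵀ * A)⁻¹ * Bᵀ)) *ᵥ ftilde) j₀ :=
  wedge_discrete_gradient_eq_projection_general ftilde A B hdet j₀
end

section
/- Let B ⊂ ℝ^d be bounded, i : ℝ^d → ℝ^d, and for x ∈ B and R > 0 set B_R(x) = {z : |z - x| ≤ |i(x)|/R}. Suppose g̃ : ℝ^d × ℝ^d × [0,∞) → ℝ^d satisfies: g̃(x,x,0) = f(x), |g̃(u,v,h) - g̃(w,v,h)| ≤ L_g|u-w|, |g̃(u,v,h) - g̃(u,w,h)| ≤ L_g|v-w|, and |g̃(x,x,h) - g̃(x,x,0)| ≤ L_g h|i(x)| for all u,v,w ∈ B_{R_g}(x), x ∈ B, h ∈ [0,H_g); and |f(x)| ≤ C₁|i(x)| on B. Then for every x ∈ B, u ∈ B_{2R_g}(x), and h < min{H_g, 1/(6L_g), 1/(4(C₁+1/6)R_g)}, there exists a unique y = Φ_h(u) ∈ B_{R_g}(x) with y = u + h g̃(u,y,h); moreover |Φ_h(u) - u| ≤ (C₁ + 1/6 + 3L_g/(2R_g)) h |i(x)|, and for u,v ∈ B_{2R_g}(x),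 |Φ_h(u) - Φ_h(v)| ≤ (7/5)|u - v|. -/
/-!
For fixed `u`, the map `y ↦ u + h • g̃(u, y, h)` is Lipschitz with constant `h L_g ≤ 1/6` on the
closed ball of radius `r = ‖i x‖ / R_g` about `x`. Splitting `g̃(u, y, h) - g̃(x, x, 0)` along
the two Lipschitz conditions and the consistency bound gives
`‖g̃(u, y, h)‖ ≤ (3/2) L_g r + (C₁ + 1/6) ‖i x‖` when `u` lies in the half ball, so the map sends
the ball into itself and Banach's fixed point theorem produces `Φ_h(u)`. Subtracting the fixed
point equations of `u` and `v` gives `(1 - h L_g) ‖y - z‖ ≤ (1 + h L_g) ‖u - v‖`, which yields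
uniqueness and the constant `7/5`.
-/

open Metric Set

theorem mul_lt_one_of_lt_one_div {a h : ℝ} (hh : 0 ≤ h) (ha : h < 1 / a) : h * a < 1 :=
  (lt_div_iff₀ (one_div_pos.mp (hh.trans_lt ha))).mp ha

structure LipschitzOnEachArg {E F : Type*} [NormedAddCommGroup E] [NormedAddCommGroup F]
    (G : E → E → F) (s : Set E) (L : ℝ) : Prop where
  left : ∀ u ∈ s, ∀ v ∈ s, ∀ w ∈ s, ‖G u v - G w v‖ ≤ L * ‖u - w‖
  right : ∀ u ∈ s, ∀ v ∈ s, ∀ w ∈ s, ‖G u v - G u w‖ ≤ L * ‖v - w‖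

namespace LipschitzOnEachArg

variable {E F : Type*} [NormedAddCommGroup E] [NormedAddCommGroup F] {s : Set E} {L h : ℝ}
  {u v x y z : E}

theorem norm_le {G : E → E → F} (hG : LipschitzOnEachArg G s L) (hx : x ∈ s) (hu : u ∈ s)
    (hy : y ∈ s) :
    ‖G u y‖ ≤ L * ‖u - x‖ + L * ‖y - x‖ + ‖G x x‖ := by
  calc ‖G u y‖ = ‖(G u y - G x y) + (G x y - G x x) + G x x‖ := by abel_nf
    _ ≤ ‖G u y - G x y‖ + ‖G x y - G x x‖ + ‖G x x‖ := norm_add₃_le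
    _ ≤ L * ‖u - x‖ + L * ‖y - x‖ + ‖G x x‖ := by
      gcongr
      · exact hG.left u hu y hy x hx
      · exact hG.right x hx y hy x hx

variable [NormedSpace ℝ E] {G : E → E → E}

theorem one_sub_mul_norm_sub_le (hG : LipschitzOnEachArg G s L) (hh : 0 ≤ h)
    (hu : u ∈ s) (hv : v ∈ s) (hy : y ∈ s) (hz : z ∈ s)
    (hyu : y = u + h • G u y) (hzv : z = v + h • G v z) :
    (1 - h * L) * ‖y - z‖ ≤ (1 + h * L) * ‖u - v‖ := by
  have hGyz : ‖G u y - G v z‖ ≤ L * ‖u - v‖ + L * ‖y - z‖ :=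
    calc ‖G u y - G v z‖ ≤ ‖G u y - G v y‖ + ‖G v y - G v z‖ :=
          norm_sub_le_norm_sub_add_norm_sub _ _ _
      _ ≤ L * ‖u - v‖ + L * ‖y - z‖ :=
        add_le_add (hG.left u hu y hy v hv) (hG.right v hv y hy z hz)
  have hyz : ‖y - z‖ ≤ ‖u - v‖ + h * (L * ‖u - v‖ + L * ‖y - z‖) :=
    calc ‖y - z‖ = ‖(u - v) + h • (G u y - G v z)‖ := by
          rw [smul_sub]; nth_rw 1 [hyu, hzv]; abel_nf
      _ ≤ ‖u - v‖ + h * ‖G u y - G v z‖ := by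
          grw [norm_add_le, norm_smul, Real.norm_of_nonneg hh]
      _ ≤ ‖u - v‖ + h * (L * ‖u - v‖ + L * ‖y - z‖) := by gcongr
  linarith

theorem norm_sub_le_seven_fifths_mul (hG : LipschitzOnEachArg G s L) (hh : 0 ≤ h)
    (hhL : h * L ≤ 1 / 6) (hu : u ∈ s) (hv : v ∈ s) (hy : y ∈ s) (hz : z ∈ s)
    (hyu : y = u + h • G u y) (hzv : z = v + h • G v z) :
    ‖y - z‖ ≤ 7 / 5 * ‖u - v‖ := by
  have := hG.one_sub_mul_norm_sub_le hh hu hv hy hz hyu hzv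
  nlinarith [norm_nonneg (y - z), norm_nonneg (u - v)]

theorem existsUnique_fixedPoint [CompleteSpace E] (hG : LipschitzOnEachArg G s L)
    (hs : IsClosed s) (hu : u ∈ s) (hh : 0 ≤ h) (hhL : h * L < 1)
    (hmaps : MapsTo (fun y ↦ u + h • G u y) s s) :
    ∃! y, y ∈ s ∧ y = u + h • G u y := by
  have hcontr : ContractingWith (h * L).toNNReal (hmaps.restrict _ s s) := by
    refine ⟨Real.toNNReal_lt_one.mpr hhL, LipschitzWith.of_dist_le_mul fun y z ↦ ?_⟩
    simp only [Subtype.dist_eq, MapsTo.val_restrict_apply, dist_eq_norm,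
      add_sub_add_left_eq_sub, ← smul_sub, norm_smul, Real.norm_of_nonneg hh]
    calc h * ‖G u y - G u z‖ ≤ h * (L * ‖(y : E) - z‖) := by
          gcongr; exact hG.right u hu y y.2 z z.2
      _ ≤ (h * L).toNNReal * ‖(y : E) - z‖ := by
          rw [← mul_assoc]; gcongr; exact Real.le_coe_toNNReal _
  obtain ⟨y, hys, hfix, -⟩ := hcontr.exists_fixedPoint' hs.isComplete hmaps hu (edist_ne_top _ _)
  refine ⟨y, ⟨hys, hfix.symm⟩, fun z ⟨hzs, hzu⟩ ↦ ?_⟩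
  have := hG.one_sub_mul_norm_sub_le hh hu hu hzs hys hzu hfix.symm
  rw [sub_self, norm_zero, mul_zero] at this
  exact sub_eq_zero.mp (norm_le_zero_iff.mp (nonpos_of_mul_nonpos_right this (by linarith)))

variable {x : E} {r M : ℝ}

theorem norm_smul_le_of_mem_closedBall (hG : LipschitzOnEachArg G (closedBall x r) L)
    (hL : 0 ≤ L) (hM : ‖G x x‖ ≤ M) (hh : 0 ≤ h) (hu : u ∈ closedBall x (r / 2))
    (hy : y ∈ closedBall x r) :
    ‖h • G u y‖ ≤ h * (3 / 2 * L * r + M) := by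
  have hr : 0 ≤ r := dist_nonneg.trans hy
  rw [mem_closedBall_iff_norm] at hu hy
  have hGuy := hG.norm_le (mem_closedBall_self hr)
    (mem_closedBall_iff_norm.mpr (by linarith : ‖u - x‖ ≤ r)) (mem_closedBall_iff_norm.mpr hy)
  rw [norm_smul, Real.norm_of_nonneg hh]
  gcongr
  nlinarith [mul_le_mul_of_nonneg_left hu hL, mul_le_mul_of_nonneg_left hy hL]

theorem existsUnique_fixedPoint_closedBall [CompleteSpace E]
    (hG : LipschitzOnEachArg G (closedBall x r) L) (hL : 0 ≤ L) (hM : ‖G x x‖ ≤ M)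
    (hh : 0 ≤ h) (hhL : h * L < 1) (hsmall : h * (3 / 2 * L * r + M) ≤ r / 2)
    (hu : u ∈ closedBall x (r / 2)) :
    ∃! y, y ∈ closedBall x r ∧ y = u + h • G u y := by
  have hsub : closedBall x (r / 2) ⊆ closedBall x r :=
    closedBall_subset_closedBall (by linarith [dist_nonneg.trans hu])
  refine hG.existsUnique_fixedPoint isClosed_closedBall (hsub hu) hh hhL fun y hy ↦ ?_
  rw [mem_closedBall_iff_norm, add_sub_right_comm]
  grw [norm_add_le, mem_closedBall_iff_norm.mp hu, hG.norm_smul_le_of_mem_closedBall hL hM hh hu hy]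
  linarith

end LipschitzOnEachArg

theorem implicit_one_step_map_exists_general {d : ℕ}
    (B : Set (EuclideanSpace ℝ (Fin d)))
    (f i : EuclideanSpace ℝ (Fin d) → EuclideanSpace ℝ (Fin d))
    (gt : EuclideanSpace ℝ (Fin d) → EuclideanSpace ℝ (Fin d) → ℝ → EuclideanSpace ℝ (Fin d))
    (C₁ Rg Lg Hg : ℝ) (hRg : 0 < Rg) (hLg : 0 < Lg)
    (hfC : ∀ x ∈ B, ‖f x‖ ≤ C₁ * ‖i x‖)
    (hcons : ∀ x ∈ B, gt x x 0 = f x)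
    (hlip1 : ∀ x ∈ B, ∀ u v w : EuclideanSpace ℝ (Fin d),
      ‖u - x‖ ≤ ‖i x‖ / Rg → ‖v - x‖ ≤ ‖i x‖ / Rg → ‖w - x‖ ≤ ‖i x‖ / Rg →
      ∀ h : ℝ, 0 ≤ h → h < Hg → ‖gt u v h - gt w v h‖ ≤ Lg * ‖u - w‖)
    (hlip2 : ∀ x ∈ B, ∀ u v w : EuclideanSpace ℝ (Fin d),
      ‖u - x‖ ≤ ‖i x‖ / Rg → ‖v - x‖ ≤ ‖i x‖ / Rg → ‖w - x‖ ≤ ‖i x‖ / Rg →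
      ∀ h : ℝ, 0 ≤ h → h < Hg → ‖gt u v h - gt u w h‖ ≤ Lg * ‖v - w‖)
    (hlip3 : ∀ x ∈ B, ∀ h : ℝ, 0 ≤ h → h < Hg →
      ‖gt x x h - gt x x 0‖ ≤ Lg * h * ‖i x‖) :
    ∀ x ∈ B, ∀ h : ℝ, 0 ≤ h →
      h < min Hg (min (1 / (6 * Lg)) (1 / (4 * (C₁ + 1 / 6) * Rg))) →
      (∀ u : EuclideanSpace ℝ (Fin d), ‖u - x‖ ≤ ‖i x‖ / (2 * Rg) →
        (∃! y : EuclideanSpace ℝ (Fin d),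
          ‖y - x‖ ≤ ‖i x‖ / Rg ∧ y = u + h • gt u y h) ∧
        (∀ y : EuclideanSpace ℝ (Fin d), ‖y - x‖ ≤ ‖i x‖ / Rg → y = u + h • gt u y h →
          ‖y - u‖ ≤ (C₁ + 1 / 6 + 3 * Lg / (2 * Rg)) * h * ‖i x‖)) ∧
      (∀ u v : EuclideanSpace ℝ (Fin d),
        ‖u - x‖ ≤ ‖i x‖ / (2 * Rg) → ‖v - x‖ ≤ ‖i x‖ / (2 * Rg) →
        ∀ y z : EuclideanSpace ℝ (Fin d),
          (‖y - x‖ ≤ ‖i x‖ / Rg ∧ y = u + h • gt u y h) →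
          (‖z - x‖ ≤ ‖i x‖ / Rg ∧ z = v + h • gt v z h) →
          ‖y - z‖ ≤ (7 / 5) * ‖u - v‖) := by
  intro x hx h hh0 hhlt
  simp only [lt_min_iff] at hhlt
  obtain ⟨hH, h6, h4⟩ := hhlt
  have hhL : h * Lg ≤ 1 / 6 := by linarith [mul_lt_one_of_lt_one_div hh0 h6]
  have hhC : h * ((C₁ + 1 / 6) * Rg) ≤ 1 / 4 := by linarith [mul_lt_one_of_lt_one_div hh0 h4]
  set r := ‖i x‖ / Rg with hr
  have hr0 : 0 ≤ r := by positivity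
  have hG : LipschitzOnEachArg (fun u y ↦ gt u y h) (closedBall x r) Lg :=
    ⟨fun u hu v hv w hw ↦ hlip1 x hx u v w hu hv hw h hh0 hH,
      fun u hu v hv w hw ↦ hlip2 x hx u v w hu hv hw h hh0 hH⟩
  have hcenter : ‖gt x x h‖ ≤ (C₁ + 1 / 6) * ‖i x‖ := by
    have hconsist := hlip3 x hx h hh0 hH
    rw [hcons x hx] at hconsist
    nlinarith [norm_le_norm_sub_add (gt x x h) (f x), hfC x hx,
      mul_le_mul_of_nonneg_right hhL (norm_nonneg (i x))]
  have hdisp : (C₁ + 1 / 6 + 3 * Lg / (2 * Rg)) * h * ‖i x‖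
      = h * (3 / 2 * Lg * r + (C₁ + 1 / 6) * ‖i x‖) := by
    rw [hr]; field_simp; ring
  have hsmall : h * (3 / 2 * Lg * r + (C₁ + 1 / 6) * ‖i x‖) ≤ r / 2 := by
    rw [show ‖i x‖ = r * Rg by rw [hr, div_mul_cancel₀ _ hRg.ne']]
    nlinarith [mul_le_mul_of_nonneg_right hhL hr0, mul_le_mul_of_nonneg_right hhC hr0]
  have hsub : closedBall x (r / 2) ⊆ closedBall x r := closedBall_subset_closedBall (by linarith)
  rw [hdisp]
  simp only [div_mul_eq_div_div_swap, ← mem_closedBall_iff_norm]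
  refine ⟨fun u hu ↦ ⟨?_, fun y hy hyu ↦ ?_⟩, fun u v hu hv y z hy hz ↦ ?_⟩
  · exact hG.existsUnique_fixedPoint_closedBall hLg.le hcenter hh0 (by linarith) hsmall hu
  · rw [mem_closedBall_iff_norm, sub_eq_of_eq_add' hyu]
    exact hG.norm_smul_le_of_mem_closedBall hLg.le hcenter hh0 hu hy
  · exact hG.norm_sub_le_seven_fifths_mul hh0 hhL (hsub hu) (hsub hv) hy.1 hz.1 hy.2 hz.2

/-- Existence, uniqueness and Lipschitz continuity of the implicitly defined one-step map
y = Φ_h(u) satisfying y = u + h g̃(u,y,h). -/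
theorem implicit_one_step_map_exists {d : ℕ}
    (B : Set (EuclideanSpace ℝ (Fin d))) (hB : Bornology.IsBounded B)
    (f i : EuclideanSpace ℝ (Fin d) → EuclideanSpace ℝ (Fin d))
    (gt : EuclideanSpace ℝ (Fin d) → EuclideanSpace ℝ (Fin d) → ℝ → EuclideanSpace ℝ (Fin d))
    (C₁ Rg Lg Hg : ℝ) (hC : 0 < C₁) (hRg : 0 < Rg) (hLg : 0 < Lg) (hHg : 0 < Hg)
    (hfC : ∀ x ∈ B, ‖f x‖ ≤ C₁ * ‖i x‖)
    (hcons : ∀ x ∈ B, gt x x 0 = f x)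
    (hlip1 : ∀ x ∈ B, ∀ u v w : EuclideanSpace ℝ (Fin d),
      ‖u - x‖ ≤ ‖i x‖ / Rg → ‖v - x‖ ≤ ‖i x‖ / Rg → ‖w - x‖ ≤ ‖i x‖ / Rg →
      ∀ h : ℝ, 0 ≤ h → h < Hg → ‖gt u v h - gt w v h‖ ≤ Lg * ‖u - w‖)
    (hlip2 : ∀ x ∈ B, ∀ u v w : EuclideanSpace ℝ (Fin d),
      ‖u - x‖ ≤ ‖i x‖ / Rg → ‖v - x‖ ≤ ‖i x‖ / Rg → ‖w - x‖ ≤ ‖i x‖ / Rg →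
      ∀ h : ℝ, 0 ≤ h → h < Hg → ‖gt u v h - gt u w h‖ ≤ Lg * ‖v - w‖)
    (hlip3 : ∀ x ∈ B, ∀ h : ℝ, 0 ≤ h → h < Hg →
      ‖gt x x h - gt x x 0‖ ≤ Lg * h * ‖i x‖) :
    ∀ x ∈ B, ∀ h : ℝ, 0 ≤ h →
      h < min Hg (min (1 / (6 * Lg)) (1 / (4 * (C₁ + 1 / 6) * Rg))) →
      (∀ u : EuclideanSpace ℝ (Fin d), ‖u - x‖ ≤ ‖i x‖ / (2 * Rg) →
        (∃! y : EuclideanSpace ℝ (Fin d),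
          ‖y - x‖ ≤ ‖i x‖ / Rg ∧ y = u + h • gt u y h) ∧
        (∀ y : EuclideanSpace ℝ (Fin d), ‖y - x‖ ≤ ‖i x‖ / Rg → y = u + h • gt u y h →
          ‖y - u‖ ≤ (C₁ + 1 / 6 + 3 * Lg / (2 * Rg)) * h * ‖i x‖)) ∧
      (∀ u v : EuclideanSpace ℝ (Fin d),
        ‖u - x‖ ≤ ‖i x‖ / (2 * Rg) → ‖v - x‖ ≤ ‖i x‖ / (2 * Rg) →
        ∀ y z : EuclideanSpace ℝ (Fin d),
          (‖y - x‖ ≤ ‖i x‖ / Rg ∧ y = u + h • gt u y h) →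
          (‖z - x‖ ≤ ‖i x‖ / Rg ∧ z = v + h • gt v z h) →
          ‖y - z‖ ≤ (7 / 5) * ‖u - v‖) :=
  implicit_one_step_map_exists_general B f i gt C₁ Rg Lg Hg hRg hLg hfC hcons hlip1 hlip2 hlip3
end
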